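/- arXiv:2102.03585 — 4 statements merged into one kernel-verified Lean document; each statement's English description precedes it below -/
import Mathlib

section
/- Let l_t ≤ u_t be real bounds for t = 0,…,T and suppose there exist indices δ_0 = −1 < δ_1 < δ_2 < … < δ_m = T such that for each i = 1,…,m−1 the intersection ⋂_{t=δ_{i-1}+1}^{δ_i+1} [l_t, u_t] is empty. Then for any sequence x = (x_0,…,x_T) with l_t ≤ x_t ≤ u_t for all t, we have Σ_{t=0}^{T-1} 1{x_{t+1} ≠ x_t} ≥ m − 1. -/
theorem stmt_5 (T m : ℕ) (hm : 1 ≤ m) (l u : ℕ → ℝ) (δ : ℕ → ℤ)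
    (hδ0 : δ 0 = -1) (hδm : δ m = (T : ℤ))
    (hmono : ∀ a b, a < b → b ≤ m → δ a < δ b)
    (hbreak : ∀ i, 1 ≤ i → i ≤ m - 1 →
      ¬ ∃ y : ℝ, ∀ t : ℕ, δ (i - 1) + 1 ≤ (t : ℤ) → (t : ℤ) ≤ δ i + 1 →
        l t ≤ y ∧ y ≤ u t)
    (x : ℕ → ℝ) (hx : ∀ t ≤ T, l t ≤ x t ∧ x t ≤ u t) :
    (m : ℝ) - 1 ≤ ∑ t ∈ Finset.range T, (if x (t + 1) ≠ x t then (1 : ℝ) else 0) := by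
  classical
  -- For each break index i, there is a change point in (δ (i-1), δ i]
  have key : ∀ i : ℕ, ∃ t : ℕ, 1 ≤ i → i ≤ m - 1 →
      (δ (i-1) + 1 ≤ (t:ℤ) ∧ (t:ℤ) ≤ δ i ∧ t < T ∧ x (t+1) ≠ x t) := by
    intro i
    by_cases hi1 : 1 ≤ i
    swap
    · exact ⟨0, fun h => absurd h hi1⟩
    by_cases him : i ≤ m - 1
    swap
    · exact ⟨0, fun _ h => absurd h him⟩
    have him' : i < m := by omega
    have hδlow : -1 ≤ δ (i-1) := by
      rcases Nat.eq_or_lt_of_le hi1 with h | h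
      · simp [← h, hδ0]
      · have := hmono 0 (i-1) (by omega) (by omega)
        rw [hδ0] at this; omega
    have hδiT : δ i < (T:ℤ) := by
      have := hmono i m him' le_rfl
      rw [hδm] at this; exact this
    by_contra hcon
    push_neg at hcon
    have h : ∀ t : ℕ, δ (i-1) + 1 ≤ (t:ℤ) → (t:ℤ) ≤ δ i → t < T → x (t+1) = x t := by
      intro t h1 h2 h3
      by_contra hne
      exact hne ((hcon t).2.2 h1 h2 h3)
    set a := (δ (i-1) + 1).toNat with ha_def
    have ha : (a:ℤ) = δ (i-1) + 1 := Int.toNat_of_nonneg (by omega)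
    have hconst : ∀ n : ℕ, (a:ℤ) + n ≤ δ i + 1 → x (a+n) = x a := by
      intro n
      induction n with
      | zero => simp
      | succ k ih =>
        intro hk
        push_cast at hk
        have hk' : (a:ℤ) + k ≤ δ i := by linarith
        have h1 : x (a+k+1) = x (a+k) := by
          apply h (a+k)
          · rw [← ha]; push_cast; linarith
          · push_cast; linarith
          · have : ((a+k:ℕ):ℤ) < (T:ℤ) := by push_cast; linarith
            exact_mod_cast this
        have : a + (k+1) = (a+k)+1 := by omega
        rw [this, h1, ih (by linarith)]
    apply hbreak i hi1 him
    refine ⟨x a, ?_⟩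
    intro t ht1 ht2
    have hta : a ≤ t := by
      have : (a:ℤ) ≤ (t:ℤ) := by rw [ha]; exact ht1
      exact_mod_cast this
    have hxt : x t = x a := by
      have := hconst (t - a) (by push_cast; omega)
      rwa [Nat.add_sub_cancel' hta] at this
    have htT : t ≤ T := by
      have : (t:ℤ) ≤ (T:ℤ) := by omega
      exact_mod_cast this
    rw [← hxt]
    exact hx t htT
  choose f hf using key
  set S := (Finset.Icc 1 (m-1)).image f with hS
  have hmonof : ∀ i j, 1 ≤ i → i ≤ m-1 → 1 ≤ j → j ≤ m-1 → i < j → f i < f j := by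
    intro i j hi1 him hj1 hjm hij
    obtain ⟨_, h2i, _, _⟩ := hf i hi1 him
    obtain ⟨h1j, _, _, _⟩ := hf j hj1 hjm
    have hle : δ i ≤ δ (j-1) := by
      rcases Nat.lt_or_ge i (j-1) with h | h
      · exact le_of_lt (hmono i (j-1) h (by omega))
      · have : i = j - 1 := by omega
        rw [this]
    have : (f i : ℤ) < (f j : ℤ) := by omega
    exact_mod_cast this
  have hinj : Set.InjOn f (Finset.Icc 1 (m-1)) := by
    intro i hi j hj hij
    simp only [Finset.coe_Icc, Set.mem_Icc] at hi hj
    by_contra hne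
    rcases lt_or_gt_of_ne hne with h | h
    · exact absurd hij (Nat.ne_of_lt (hmonof i j hi.1 hi.2 hj.1 hj.2 h))
    · exact absurd hij.symm (Nat.ne_of_lt (hmonof j i hj.1 hj.2 hi.1 hi.2 h))
  have hcard : S.card = m - 1 := by
    rw [hS, Finset.card_image_of_injOn hinj, Nat.card_Icc]
    omega
  have hsub : S ⊆ Finset.range T := by
    intro t ht
    rw [hS, Finset.mem_image] at ht
    obtain ⟨i, hi, rfl⟩ := ht
    rw [Finset.mem_Icc] at hi
    obtain ⟨_, _, h3, _⟩ := hf i hi.1 hi.2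
    exact Finset.mem_range.mpr h3
  have hsum1 : ∑ t ∈ S, (if x (t + 1) ≠ x t then (1 : ℝ) else 0) = (S.card : ℝ) := by
    rw [Finset.sum_congr rfl (fun t ht => ?_), Finset.sum_const, nsmul_eq_mul, mul_one]
    rw [hS, Finset.mem_image] at ht
    obtain ⟨i, hi, rfl⟩ := ht
    rw [Finset.mem_Icc] at hi
    obtain ⟨_, _, _, h4⟩ := hf i hi.1 hi.2
    exact if_pos h4
  have hle : ∑ t ∈ S, (if x (t + 1) ≠ x t then (1 : ℝ) else 0)
      ≤ ∑ t ∈ Finset.range T, (if x (t + 1) ≠ x t then (1 : ℝ) else 0) := by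
    apply Finset.sum_le_sum_of_subset_of_nonneg hsub
    intro t _ _
    positivity
  rw [hsum1, hcard] at hle
  have : (m : ℝ) - 1 ≤ ((m-1 : ℕ) : ℝ) := by
    rw [Nat.cast_sub hm]; simp
  linarith
end

section
/- Let l_t ≤ u_t for t = 0,…,T, and suppose the greedy construction yields indices δ_0 = −1 < δ_1 < … < δ_m = T and points η_1,…,η_m with η_i ∈ ⋂_{t=δ_{i-1}+1}^{δ_i} [l_t, u_t] for each i, where each δ_i (i < m) is maximal such that this intersection is nonempty (so ⋂_{t=δ_{i-1}+1}^{δ_i+1} [l_t, u_t] = ∅ for i < m). Define x_t = η_i for δ_{i-1} < t ≤ δ_i (and x_t = η_1 for t ≤ δ_1, starting at t = 0). Then x is feasible (l_t ≤ x_t ≤ u_t for all t), it attains Σ_{t=0}^{T-1} 1{x_{t+1} ≠ x_t} ≤ m − 1, and hence x minimizes the number of change points Σ_{t=0}^{T-1} 1{y_{t+1} ≠ y_t} among all feasible sequences y. -/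
theorem stmt_6 (T m : ℕ) (hm : 1 ≤ m) (l u : ℕ → ℝ) (δ : ℕ → ℤ) (η : ℕ → ℝ)
    (hδ0 : δ 0 = -1) (hδm : δ m = (T : ℤ))
    (hmono : ∀ a b, a < b → b ≤ m → δ a < δ b)
    (hη : ∀ i, 1 ≤ i → i ≤ m → ∀ t : ℕ, δ (i - 1) + 1 ≤ (t : ℤ) → (t : ℤ) ≤ δ i →
      l t ≤ η i ∧ η i ≤ u t)
    (hmax : ∀ i, 1 ≤ i → i < m →
      ¬ ∃ y : ℝ, ∀ t : ℕ, δ (i - 1) + 1 ≤ (t : ℤ) → (t : ℤ) ≤ δ i + 1 →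
        l t ≤ y ∧ y ≤ u t)
    (x : ℕ → ℝ)
    (hxdef : ∀ i, 1 ≤ i → i ≤ m → ∀ t : ℕ, δ (i - 1) < (t : ℤ) → (t : ℤ) ≤ δ i →
      x t = η i) :
    (∀ t ≤ T, l t ≤ x t ∧ x t ≤ u t) ∧
    (∑ t ∈ Finset.range T, (if x (t + 1) ≠ x t then (1 : ℝ) else 0)) ≤ (m : ℝ) - 1 ∧
    (∀ y : ℕ → ℝ, (∀ t ≤ T, l t ≤ y t ∧ y t ≤ u t) →
      (∑ t ∈ Finset.range T, (if x (t + 1) ≠ x t then (1 : ℝ) else 0)) ≤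
      (∑ t ∈ Finset.range T, (if y (t + 1) ≠ y t then (1 : ℝ) else 0))) := by
  classical
  -- monotonicity (≤ version)
  have hδle : ∀ a b : ℕ, a ≤ b → b ≤ m → δ a ≤ δ b := by
    intro a b hab hbm
    rcases eq_or_lt_of_le hab with h | h
    · exact le_of_eq (by rw [h])
    · exact le_of_lt (hmono a b h hbm)
  have hδneg : ∀ i ≤ m, -1 ≤ δ i := by
    intro i hi
    have := hδle 0 i (Nat.zero_le i) hi
    omega
  have hδT : ∀ i ≤ m, δ i ≤ (T : ℤ) := by
    intro i hi
    have := hδle i m hi le_rfl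
    omega
  -- window existence
  have hwin : ∀ t : ℕ, (t : ℤ) ≤ (T : ℤ) →
      ∃ i, 1 ≤ i ∧ i ≤ m ∧ δ (i - 1) < (t : ℤ) ∧ (t : ℤ) ≤ δ i := by
    intro t ht
    have hex : ∃ i, 1 ≤ i ∧ (t : ℤ) ≤ δ i := ⟨m, hm, by omega⟩
    obtain ⟨hi1, hiδ⟩ := Nat.find_spec hex
    set i := Nat.find hex with hidef
    have him : i ≤ m := Nat.find_le ⟨hm, by omega⟩
    refine ⟨i, hi1, him, ?_, hiδ⟩
    rcases Nat.eq_or_lt_of_le hi1 with h1 | h1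
    · have : i - 1 = 0 := by omega
      rw [this, hδ0]
      omega
    · have hlt : i - 1 < i := by omega
      have := Nat.find_min hex hlt
      rw [not_and_or] at this
      rcases this with h | h
      · omega
      · omega
  -- windows are disjoint
  have hdisj : ∀ i j : ℕ, 1 ≤ i → i ≤ m → 1 ≤ j → j ≤ m → ∀ z : ℤ,
      δ (i - 1) < z → z ≤ δ i → δ (j - 1) < z → z ≤ δ j → i = j := by
    intro i j hi1 him hj1 hjm z hzi1 hzi2 hzj1 hzj2
    rcases lt_trichotomy i j with h | h | h
    · exfalso
      have : δ i ≤ δ (j - 1) := hδle i (j - 1) (by omega) (by omega)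
      omega
    · exact h
    · exfalso
      have : δ j ≤ δ (i - 1) := hδle j (i - 1) (by omega) (by omega)
      omega
  -- feasibility
  have hfeas : ∀ t ≤ T, l t ≤ x t ∧ x t ≤ u t := by
    intro t ht
    have ht' : (t : ℤ) ≤ (T : ℤ) := by exact_mod_cast ht
    obtain ⟨i, h1, h2, h3, h4⟩ := hwin t ht'
    rw [hxdef i h1 h2 t h3 h4]
    exact hη i h1 h2 t (by omega) h4
  -- rewrite sums as cardinalities
  have hsum : ∀ z : ℕ → ℝ,
      (∑ t ∈ Finset.range T, (if z (t + 1) ≠ z t then (1 : ℝ) else 0)) =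
      ((Finset.filter (fun t => z (t + 1) ≠ z t) (Finset.range T)).card : ℝ) := by
    intro z
    rw [Finset.sum_boole]
  -- bound on x's change points
  have hxcard : (Finset.filter (fun t => x (t + 1) ≠ x t) (Finset.range T)).card ≤ m - 1 := by
    have hsub : Finset.filter (fun t => x (t + 1) ≠ x t) (Finset.range T) ⊆
        (Finset.Icc 1 (m - 1)).image (fun i => (δ i).toNat) := by
      intro t ht
      rw [Finset.mem_filter, Finset.mem_range] at ht
      obtain ⟨htT, hne⟩ := ht
      have ht1 : (t : ℤ) ≤ (T : ℤ) := by exact_mod_cast le_of_lt htT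
      have ht2 : ((t + 1 : ℕ) : ℤ) ≤ (T : ℤ) := by exact_mod_cast htT
      obtain ⟨i, hi1, him, hi3, hi4⟩ := hwin t ht1
      obtain ⟨j, hj1, hjm, hj3, hj4⟩ := hwin (t + 1) ht2
      push_cast at hj3 hj4
      have hij : i < j := by
        rcases lt_trichotomy i j with h | h | h
        · exact h
        · exfalso
          subst h
          apply hne
          have hx1 : x (t + 1) = η i := hxdef i hi1 him (t + 1) (by push_cast; omega)
            (by push_cast; omega)
          have hx2 : x t = η i := hxdef i hi1 him t hi3 hi4
          rw [hx1, hx2]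
        · exfalso
          have : δ j ≤ δ (i - 1) := hδle j (i - 1) (by omega) (by omega)
          omega
      have hδi : δ i ≤ δ (j - 1) := hδle i (j - 1) (by omega) (by omega)
      have hteq : δ i = (t : ℤ) := by omega
      rw [Finset.mem_image]
      exact ⟨i, Finset.mem_Icc.mpr ⟨hi1, by omega⟩, by rw [hteq]; simp⟩
    calc (Finset.filter (fun t => x (t + 1) ≠ x t) (Finset.range T)).card
        ≤ ((Finset.Icc 1 (m - 1)).image (fun i => (δ i).toNat)).card :=
          Finset.card_le_card hsub
      _ ≤ (Finset.Icc 1 (m - 1)).card := Finset.card_image_le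
      _ = m - 1 := by rw [Nat.card_Icc]; omega
  refine ⟨hfeas, ?_, ?_⟩
  · rw [hsum]
    have : ((Finset.filter (fun t => x (t + 1) ≠ x t) (Finset.range T)).card : ℝ) ≤
        ((m - 1 : ℕ) : ℝ) := by exact_mod_cast hxcard
    calc ((Finset.filter (fun t => x (t + 1) ≠ x t) (Finset.range T)).card : ℝ)
        ≤ ((m - 1 : ℕ) : ℝ) := this
      _ = (m : ℝ) - 1 := by
          rw [Nat.cast_sub hm]; norm_num
  · intro y hy
    rw [hsum, hsum]
    -- each window 1 ≤ i < m forces a change point of y in (δ (i-1), δ i]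
    have key : ∀ i : ℕ, ∃ t : ℕ, 1 ≤ i → i < m →
        (t < T ∧ y (t + 1) ≠ y t ∧ δ (i - 1) < (t : ℤ) ∧ (t : ℤ) ≤ δ i) := by
      intro i
      by_cases hi : 1 ≤ i ∧ i < m
      · obtain ⟨hi1, him⟩ := hi
        by_contra hcon
        push_neg at hcon
        -- so y is constant on the window (δ (i-1), δ i + 1]
        have hiT : δ i + 1 ≤ (T : ℤ) := by
          have := hmono i m him le_rfl
          omega
        have hconst : ∀ t : ℕ, δ (i - 1) < (t : ℤ) → (t : ℤ) ≤ δ i → y (t + 1) = y t := by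
          intro t h1 h2
          have htT : t < T := by
            have : (t : ℤ) < (T : ℤ) := by omega
            exact_mod_cast this
          by_contra hne
          have := (hcon t).2.2 htT hne h1
          omega
        have haneg : -1 ≤ δ (i - 1) := hδneg (i - 1) (by omega)
        set a : ℕ := (δ (i - 1) + 1).toNat with hadef
        have ha : (a : ℤ) = δ (i - 1) + 1 := Int.toNat_of_nonneg (by omega)
        have hclaim : ∀ k : ℕ, ((a + k : ℕ) : ℤ) ≤ δ i + 1 → y (a + k) = y a := by
          intro k
          induction k with
          | zero => intro _; rfl
          | succ n ih =>
            intro hk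
            push_cast at hk
            have h1 : δ (i - 1) < ((a + n : ℕ) : ℤ) := by push_cast; omega
            have h2 : ((a + n : ℕ) : ℤ) ≤ δ i := by push_cast; omega
            have := hconst (a + n) h1 h2
            have hih : y (a + n) = y a := ih (by push_cast; omega)
            calc y (a + (n + 1)) = y ((a + n) + 1) := by ring_nf
              _ = y (a + n) := this
              _ = y a := hih
        apply hmax i hi1 him
        refine ⟨y a, ?_⟩
        intro t h1 h2
        have hta : a ≤ t := by
          have : (a : ℤ) ≤ (t : ℤ) := by omega
          exact_mod_cast this
        have htT : t ≤ T := by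
          have : (t : ℤ) ≤ (T : ℤ) := by omega
          exact_mod_cast this
        have hyt : y t = y a := by
          have := hclaim (t - a) (by push_cast; omega)
          rwa [Nat.add_sub_cancel' hta] at this
        have := hy t htT
        rw [hyt] at this
        exact this
      · exact ⟨0, fun h1 h2 => absurd ⟨h1, h2⟩ hi⟩
    choose f hf using key
    have hinj : Set.InjOn f ↑(Finset.Icc 1 (m - 1)) := by
      intro i hi j hj hij
      rw [Finset.coe_Icc, Set.mem_Icc] at hi hj
      obtain ⟨_, _, hi3, hi4⟩ := hf i hi.1 (by omega)
      obtain ⟨_, _, hj3, hj4⟩ := hf j hj.1 (by omega)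
      rw [hij] at hi3 hi4
      exact hdisj i j hi.1 (by omega) hj.1 (by omega) (f j) hi3 hi4 hj3 hj4
    have hmaps : ∀ i ∈ Finset.Icc 1 (m - 1),
        f i ∈ Finset.filter (fun t => y (t + 1) ≠ y t) (Finset.range T) := by
      intro i hi
      rw [Finset.mem_Icc] at hi
      obtain ⟨h1, h2, _, _⟩ := hf i hi.1 (by omega)
      rw [Finset.mem_filter, Finset.mem_range]
      exact ⟨h1, h2⟩
    have hcard : m - 1 ≤ (Finset.filter (fun t => y (t + 1) ≠ y t) (Finset.range T)).card := by
      calc m - 1 = (Finset.Icc 1 (m - 1)).card := by rw [Nat.card_Icc]; omega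
        _ ≤ (Finset.filter (fun t => y (t + 1) ≠ y t) (Finset.range T)).card :=
            Finset.card_le_card_of_injOn f hmaps hinj
    have : (Finset.filter (fun t => x (t + 1) ≠ x t) (Finset.range T)).card ≤
        (Finset.filter (fun t => y (t + 1) ≠ y t) (Finset.range T)).card :=
      le_trans hxcard hcard
    exact_mod_cast this
end

section
/- Fix 0 < α < 1 and bounds l_t ≤ u_t for t = 0,…,T. Let x̂ = (x̂_0,…,x̂_T) be an optimal solution of: minimize (1−α)·Σ_{t=0}^T 1{x_t ≠ 0} + α·Σ_{t=1}^T 1{x_t ≠ x_{t-1}} subject to l_t ≤ x_t ≤ u_t. Let i ≤ j be such that l_t ≤ 0 ≤ u_t for all t ∈ {i,…,j} (a zero-feasible sequence). Then either x̂_t = 0 for all t ∈ {i,…,j}, or x̂_t ≠ 0 for all t ∈ {i,…,j}. -/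
lemma exists_adj (P : ℕ → Prop) :
    ∀ b a, a ≤ b → P a → ¬ P b → ∃ τ, a ≤ τ ∧ τ + 1 ≤ b ∧ P τ ∧ ¬ P (τ + 1) := by
  intro b
  induction b with
  | zero => intro a ha hPa hPb; interval_cases a; exact absurd hPa hPb
  | succ b ih =>
    intro a ha hPa hPb
    by_cases hb : P b
    · have hab : a ≤ b := by
        rcases Nat.lt_succ_iff_lt_or_eq.mp (Nat.lt_succ_of_le ha) with h | h
        · omega
        · exact absurd (h ▸ hPa) hPb
      exact ⟨b, hab, le_refl _, hb, hPb⟩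
    · have hab : a ≤ b := by
        have : a ≠ b + 1 := fun h => hPb (h ▸ hPa)
        have : a ≠ b := fun h => hb (h ▸ hPa)
        omega
      obtain ⟨τ, h1, h2, h3, h4⟩ := ih a hab hPa hb
      exact ⟨τ, h1, by omega, h3, h4⟩

lemma sum_one_pt (A : Finset ℕ) (g h : ℕ → ℝ) (s : ℕ) (hs : s ∈ A)
    (heq : ∀ t ∈ A, t ≠ s → g t = h t) (hgs : g s = 0) (hhs : h s = 1) :
    ∑ t ∈ A, g t + 1 ≤ ∑ t ∈ A, h t := by
  rw [← Finset.add_sum_erase A g hs, ← Finset.add_sum_erase A h hs, hgs, hhs]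
  have : ∑ t ∈ A.erase s, g t = ∑ t ∈ A.erase s, h t :=
    Finset.sum_congr rfl fun t ht =>
      heq t (Finset.mem_of_mem_erase ht) (Finset.ne_of_mem_erase ht)
  linarith

lemma sum_le_two_pt (A : Finset ℕ) (g h : ℕ → ℝ) (m m' : ℕ) (hm : m ∈ A)
    (heq : ∀ t ∈ A, t ≠ m → t ≠ m' → g t = h t)
    (hgm : g m = 0) (hhm : h m = 1)
    (hg1 : ∀ t, g t ≤ 1) (hh0 : ∀ t, 0 ≤ h t) :
    ∑ t ∈ A, g t ≤ ∑ t ∈ A, h t := by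
  rw [← Finset.add_sum_erase A g hm, ← Finset.add_sum_erase A h hm, hgm, hhm]
  by_cases hm' : m' ∈ A.erase m
  · rw [← Finset.add_sum_erase _ g hm', ← Finset.add_sum_erase _ h hm']
    have heq2 : ∑ t ∈ (A.erase m).erase m', g t = ∑ t ∈ (A.erase m).erase m', h t := by
      refine Finset.sum_congr rfl fun t ht => ?_
      have ht1 := Finset.mem_of_mem_erase ht
      exact heq t (Finset.mem_of_mem_erase ht1) (Finset.ne_of_mem_erase ht1)
        (Finset.ne_of_mem_erase ht)
    have := hg1 m'
    have := hh0 m'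
    linarith
  · have heq2 : ∑ t ∈ A.erase m, g t = ∑ t ∈ A.erase m, h t := by
      refine Finset.sum_congr rfl fun t ht => ?_
      have htm' : t ≠ m' := fun h => hm' (h ▸ ht)
      exact heq t (Finset.mem_of_mem_erase ht) (Finset.ne_of_mem_erase ht) htm'
    linarith

lemma key_lemma (T : ℕ) (α : ℝ) (hα1 : 0 < α) (hα2 : α < 1) (l u : ℕ → ℝ)
    (f : (ℕ → ℝ) → ℝ)
    (hf : ∀ x : ℕ → ℝ, f x =
      (1 - α) * ∑ t ∈ Finset.range (T + 1), (if x t ≠ 0 then (1 : ℝ) else 0)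
      + α * ∑ t ∈ Finset.Icc 1 T, (if x t ≠ x (t - 1) then (1 : ℝ) else 0))
    (xhat : ℕ → ℝ) (hfeas : ∀ t ≤ T, l t ≤ xhat t ∧ xhat t ≤ u t)
    (hopt : ∀ y : ℕ → ℝ, (∀ t ≤ T, l t ≤ y t ∧ y t ≤ u t) → f xhat ≤ f y)
    (s : ℕ) (hsT : s ≤ T) (hs : xhat s ≠ 0) (hl : l s ≤ 0) (hu : 0 ≤ u s)
    (m m' : ℕ) (hm1 : 1 ≤ m) (hmT : m ≤ T)
    (hmm : m = s ∨ m = s + 1) (hm'm : m' = s ∨ m' = s + 1) (hne : m ≠ m')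
    (hjump : xhat m ≠ xhat (m - 1))
    (hyjump : (Function.update xhat s 0) m = (Function.update xhat s 0) (m - 1)) :
    False := by
  set y := Function.update xhat s 0 with hy
  have hyt : ∀ t, t ≠ s → y t = xhat t := fun t ht => Function.update_of_ne ht 0 xhat
  have hys : y s = 0 := Function.update_self s 0 xhat
  have hyfeas : ∀ t ≤ T, l t ≤ y t ∧ y t ≤ u t := by
    intro t htT
    by_cases h : t = s
    · subst h; rw [hys]; exact ⟨hl, hu⟩
    · rw [hyt t h]; exact hfeas t htT
  have hle := hopt y hyfeas
  -- sparsity sums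
  have hS : (∑ t ∈ Finset.range (T + 1), (if y t ≠ 0 then (1 : ℝ) else 0)) + 1 ≤
      ∑ t ∈ Finset.range (T + 1), (if xhat t ≠ 0 then (1 : ℝ) else 0) := by
    apply sum_one_pt _ _ _ s (Finset.mem_range.mpr (by omega))
    · intro t _ hts; rw [hyt t hts]
    · simp [hys]
    · simp [hs]
  -- jump sums
  have hJ : (∑ t ∈ Finset.Icc 1 T, (if y t ≠ y (t - 1) then (1 : ℝ) else 0)) ≤
      ∑ t ∈ Finset.Icc 1 T, (if xhat t ≠ xhat (t - 1) then (1 : ℝ) else 0) := by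
    apply sum_le_two_pt _ _ _ m m' (Finset.mem_Icc.mpr ⟨hm1, hmT⟩)
    · intro t ht htm htm'
      have ht1 : 1 ≤ t := (Finset.mem_Icc.mp ht).1
      have hts : t ≠ s := by omega
      have hts1 : t - 1 ≠ s := by omega
      rw [hyt t hts, hyt (t - 1) hts1]
    · simp [hyjump]
    · simp [hjump]
    · intro t; split_ifs <;> norm_num
    · intro t; split_ifs <;> norm_num
  rw [hf xhat, hf y] at hle
  nlinarith [mul_le_mul_of_nonneg_left hJ (le_of_lt hα1),
    mul_le_mul_of_nonneg_left hS (by linarith : (0:ℝ) ≤ 1 - α)]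

theorem stmt_7 (T : ℕ) (α : ℝ) (hα1 : 0 < α) (hα2 : α < 1) (l u : ℕ → ℝ)
    (f : (ℕ → ℝ) → ℝ)
    (hf : ∀ x : ℕ → ℝ, f x =
      (1 - α) * ∑ t ∈ Finset.range (T + 1), (if x t ≠ 0 then (1 : ℝ) else 0)
      + α * ∑ t ∈ Finset.Icc 1 T, (if x t ≠ x (t - 1) then (1 : ℝ) else 0))
    (xhat : ℕ → ℝ) (hfeas : ∀ t ≤ T, l t ≤ xhat t ∧ xhat t ≤ u t)
    (hopt : ∀ y : ℕ → ℝ, (∀ t ≤ T, l t ≤ y t ∧ y t ≤ u t) → f xhat ≤ f y)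
    (i j : ℕ) (hij : i ≤ j) (hjT : j ≤ T)
    (hzero : ∀ t, i ≤ t → t ≤ j → l t ≤ 0 ∧ 0 ≤ u t) :
    (∀ t, i ≤ t → t ≤ j → xhat t = 0) ∨ (∀ t, i ≤ t → t ≤ j → xhat t ≠ 0) := by
  by_contra hcon
  push_neg at hcon
  obtain ⟨⟨nb, hnb1, hnb2, hnb3⟩, ⟨za, hza1, hza2, hza3⟩⟩ := hcon
  rcases lt_trichotomy za nb with hlt | heq | hgt
  · -- zero at za < nonzero at nb : find τ with xhat τ = 0, xhat (τ+1) ≠ 0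
    obtain ⟨τ, h1, h2, h3, h4⟩ :=
      exists_adj (fun t => xhat t = 0) nb za (le_of_lt hlt) hza3 hnb3
    -- change index s = τ + 1 to 0; jump 1→0 at m = τ+1, other jump at m' = τ+2
    have hsj : τ + 1 ≤ j := le_trans h2 hnb2
    have hsi : i ≤ τ + 1 := by omega
    exact key_lemma T α hα1 hα2 l u f hf xhat hfeas hopt (τ + 1) (by omega) h4
      (hzero _ hsi hsj).1 (hzero _ hsi hsj).2 (τ + 1) (τ + 2) (by omega) (by omega)
      (Or.inl rfl) (Or.inr rfl) (by omega)
      (by simpa [h3] using h4)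
      (by simp [Function.update_self, Function.update_of_ne (by omega : τ ≠ τ + 1), h3])
  · exact hnb3 (heq ▸ hza3)
  · -- nonzero at nb < zero at za : find τ with xhat τ ≠ 0, xhat (τ+1) = 0
    obtain ⟨τ, h1, h2, h3, h4⟩ :=
      exists_adj (fun t => xhat t ≠ 0) za nb (le_of_lt hgt) hnb3 (not_not.mpr hza3)
    push_neg at h4
    have hsj : τ ≤ j := by omega
    have hsi : i ≤ τ := le_trans hnb1 h1
    have hτj : τ + 1 ≤ j := le_trans h2 hza2
    -- change index s = τ to 0; jump 1→0 at m = τ+1, other jump at m' = τ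
    exact key_lemma T α hα1 hα2 l u f hf xhat hfeas hopt τ (by omega) h3
      (hzero _ hsi hsj).1 (hzero _ hsi hsj).2 (τ + 1) τ (by omega) (by omega)
      (Or.inr rfl) (Or.inl rfl) (by omega)
      (by simpa [h4] using (Ne.symm h3))
      (by simp [Function.update_self, Function.update_of_ne (by omega : τ + 1 ≠ τ), h4])
end

section
/- Fix 0 < α < 1 and a zero-feasible consecutive pair at positions τ, τ+1 (i.e., l_τ ≤ 0 ≤ u_τ and l_{τ+1} ≤ 0 ≤ u_{τ+1}). Let x be feasible with x_τ = 0 and x_{τ+1} ≠ 0, and define x' by x'_{τ+1} = 0 and x'_t = x_t for t ≠ τ+1. Then x' is feasible and f(x') ≤ f(x) − (1−α) < f(x), where f(x) = (1−α)·Σ_{t=0}^T 1{x_t ≠ 0} + α·Σ_{t=1}^T 1{x_t ≠ x_{t-1}}. -/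
theorem stmt_8 (T : ℕ) (α : ℝ) (hα1 : 0 < α) (hα2 : α < 1) (l u : ℕ → ℝ)
    (τ : ℕ) (hτ : τ + 1 ≤ T)
    (hz1 : l τ ≤ 0 ∧ 0 ≤ u τ) (hz2 : l (τ + 1) ≤ 0 ∧ 0 ≤ u (τ + 1))
    (x : ℕ → ℝ) (hfeas : ∀ t ≤ T, l t ≤ x t ∧ x t ≤ u t)
    (hx0 : x τ = 0) (hx1 : x (τ + 1) ≠ 0)
    (f : (ℕ → ℝ) → ℝ)
    (hf : ∀ z : ℕ → ℝ, f z =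
      (1 - α) * ∑ t ∈ Finset.range (T + 1), (if z t ≠ 0 then (1 : ℝ) else 0)
      + α * ∑ t ∈ Finset.Icc 1 T, (if z t ≠ z (t - 1) then (1 : ℝ) else 0))
    (x' : ℕ → ℝ) (hx' : x' = Function.update x (τ + 1) 0) :
    (∀ t ≤ T, l t ≤ x' t ∧ x' t ≤ u t) ∧ f x' ≤ f x - (1 - α) ∧ f x' < f x := by
  have hx'eq : ∀ t, t ≠ τ + 1 → x' t = x t := by
    intro t ht; rw [hx']; exact Function.update_of_ne ht 0 x
  have hx'τ1 : x' (τ + 1) = 0 := by rw [hx']; exact Function.update_self _ _ _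
  have hx'τ : x' τ = x τ := hx'eq τ (by omega)
  have hfeas' : ∀ t ≤ T, l t ≤ x' t ∧ x' t ≤ u t := by
    intro t ht
    by_cases h : t = τ + 1
    · rw [h, hx'τ1]; exact ⟨hz2.1, hz2.2⟩
    · rw [hx'eq t h]; exact hfeas t ht
  have hmem1 : τ + 1 ∈ Finset.range (T + 1) := by
    simp only [Finset.mem_range]; omega
  have hS1 : ∑ t ∈ Finset.range (T + 1), (if x' t ≠ 0 then (1 : ℝ) else 0)
      = ∑ t ∈ Finset.range (T + 1), (if x t ≠ 0 then (1 : ℝ) else 0) - 1 := by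
    rw [← Finset.sum_erase_add _ _ hmem1,
        ← Finset.sum_erase_add _ (fun t => if x t ≠ 0 then (1 : ℝ) else 0) hmem1]
    have hrest : ∑ t ∈ (Finset.range (T + 1)).erase (τ + 1), (if x' t ≠ 0 then (1 : ℝ) else 0)
        = ∑ t ∈ (Finset.range (T + 1)).erase (τ + 1), (if x t ≠ 0 then (1 : ℝ) else 0) := by
      refine Finset.sum_congr rfl fun t ht => ?_
      rw [hx'eq t (Finset.ne_of_mem_erase ht)]
    rw [hrest, if_pos hx1, if_neg (by simp [hx'τ1])]
    ring
  have hS2 : ∑ t ∈ Finset.Icc 1 T, (if x' t ≠ x' (t - 1) then (1 : ℝ) else 0)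
      ≤ ∑ t ∈ Finset.Icc 1 T, (if x t ≠ x (t - 1) then (1 : ℝ) else 0) := by
    have hg1 : (if x' (τ + 1) ≠ x' (τ + 1 - 1) then (1 : ℝ) else 0) = 0 := by
      rw [if_neg]; simp only [Nat.add_sub_cancel, hx'τ1, hx'τ, hx0, ne_eq, not_true_eq_false,
        not_false_eq_true]
    have hH1 : (if x (τ + 1) ≠ x (τ + 1 - 1) then (1 : ℝ) else 0) = 1 := by
      rw [if_pos]; simp only [Nat.add_sub_cancel, hx0]; exact hx1
    by_cases hc : τ + 2 ≤ T
    · have hm1 : τ + 1 ∈ Finset.Icc 1 T := by simp only [Finset.mem_Icc]; omega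
      have hm2 : τ + 2 ∈ (Finset.Icc 1 T).erase (τ + 1) := by
        simp only [Finset.mem_erase, Finset.mem_Icc]; omega
      rw [← Finset.sum_erase_add _ _ hm1, ← Finset.sum_erase_add _ _ hm2,
          ← Finset.sum_erase_add _ (fun t => if x t ≠ x (t - 1) then (1 : ℝ) else 0) hm1,
          ← Finset.sum_erase_add _ (fun t => if x t ≠ x (t - 1) then (1 : ℝ) else 0) hm2]
      have hrest : ∑ t ∈ ((Finset.Icc 1 T).erase (τ + 1)).erase (τ + 2),
            (if x' t ≠ x' (t - 1) then (1 : ℝ) else 0)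
          = ∑ t ∈ ((Finset.Icc 1 T).erase (τ + 1)).erase (τ + 2),
            (if x t ≠ x (t - 1) then (1 : ℝ) else 0) := by
        refine Finset.sum_congr rfl fun t ht => ?_
        simp only [Finset.mem_erase, Finset.mem_Icc] at ht
        rw [hx'eq t ht.2.1, hx'eq (t - 1) (by omega)]
      have hg2 : (if x' (τ + 2) ≠ x' (τ + 2 - 1) then (1 : ℝ) else 0) ≤ 1 := by
        split <;> norm_num
      have hH2 : (0 : ℝ) ≤ (if x (τ + 2) ≠ x (τ + 2 - 1) then (1 : ℝ) else 0) := by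
        split <;> norm_num
      simp only [hrest, hg1, hH1]
      linarith
    · refine Finset.sum_le_sum fun t ht => ?_
      simp only [Finset.mem_Icc] at ht
      by_cases h : t = τ + 1
      · rw [h, hg1]; split <;> norm_num
      · rw [hx'eq t h, hx'eq (t - 1) (by omega)]
  have h2 : f x' ≤ f x - (1 - α) := by
    rw [hf x, hf x', hS1]
    nlinarith [hS2]
  exact ⟨hfeas', h2, by linarith⟩
end
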